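/- arXiv:1208.0196 — 2 statements merged into one kernel-verified Lean document; each statement's English description precedes it below -/
import Mathlib

section
/- SO(2,ℝ) is a maximal compact subgroup of SL(2,ℝ): SO(2,ℝ) is a compact subgroup of SL(2,ℝ), and every compact subgroup K of SL(2,ℝ) with SO(2,ℝ) ≤ K satisfies K = SO(2,ℝ). -/
open Matrix

abbrev SL2R := Matrix.SpecialLinearGroup (Fin 2) ℝ

/-- `SO(2,ℝ)` as a subgroup of `SL(2,ℝ)`. -/
def SO2 : Subgroup SL2R where
  carrier := {g | ∃ x y : ℝ, x ^ 2 + y ^ 2 = 1 ∧ (g : Matrix (Fin 2) (Fin 2) ℝ) = !![x, -y; y, x]}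
  one_mem' := ⟨1, 0, by norm_num, by simp [Matrix.SpecialLinearGroup.coe_one, Matrix.one_fin_two]⟩
  mul_mem' := by
    rintro a b ⟨x, y, hxy, ha⟩ ⟨x', y', hxy', hb⟩
    refine ⟨x * x' - y * y', x * y' + y * x', by linear_combination (x' ^ 2 + y' ^ 2) * hxy + hxy', ?_⟩
    rw [Matrix.SpecialLinearGroup.coe_mul, ha, hb, Matrix.mul_fin_two]
    congr 1 <;> ring
  inv_mem' := by
    rintro a ⟨x, y, hxy, ha⟩
    refine ⟨x, -y, by linear_combination hxy, ?_⟩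
    rw [Matrix.SpecialLinearGroup.coe_inv, ha, Matrix.adjugate_fin_two]
    norm_num

/-- The topology on `SL(2,ℝ)` as a subspace of the space of 2×2 real matrices. -/
instance : TopologicalSpace SL2R :=
  TopologicalSpace.induced (fun g : SL2R => (g : Matrix (Fin 2) (Fin 2) ℝ)) inferInstance

/-!
Compactness: `SO(2,ℝ)` is the image of the unit circle of `ℂ` under `z ↦ !![z.re, -z.im; z.im, z.re]`.

Maximality: rotating the first column of `g ∈ SL(2,ℝ)` onto the positive axis writes
`r * g = !![t, s; 0, t⁻¹]` with `r ∈ SO(2,ℝ)` and `t > 0`. If `g` lies in a compact subgroup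
`K ⊇ SO(2,ℝ)`, so does `r * g`, and the entries of its powers stay bounded: the diagonal entries
`tᵏ, t⁻ᵏ` force `t = 1`, after which the corner entry `k * s` forces `s = 0`, so `g = r⁻¹`.
-/

section Archimedean

variable {α : Type*} [Field α] [LinearOrder α] [IsStrictOrderedRing α] [Archimedean α]

lemma abs_le_one_of_forall_abs_pow_le {t C : α} (h : ∀ k : ℕ, |t ^ k| ≤ C) : |t| ≤ 1 := by
  by_contra! ht
  obtain ⟨k, hk⟩ := pow_unbounded_of_one_lt C ht
  exact (h k).not_gt (abs_pow t k ▸ hk)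

lemma eq_zero_of_forall_abs_natCast_mul_le {s C : α} (h : ∀ k : ℕ, |(k : α) * s| ≤ C) : s = 0 := by
  by_contra hs
  have hs' : 0 < |s| := abs_pos.2 hs
  obtain ⟨k, hk⟩ := exists_nat_gt (C / |s|)
  have := h k
  rw [abs_mul, Nat.abs_cast] at this
  exact this.not_gt ((div_lt_iff₀ hs').1 hk)

end Archimedean

namespace Matrix

variable {R : Type*} [CommRing R]

lemma exists_fin_two_upperTriangular_pow (a b d : R) (k : ℕ) :
    ∃ c, !![a, b; 0, d] ^ k = !![a ^ k, c; 0, d ^ k] := by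
  induction k with
  | zero => exact ⟨0, by simp [one_fin_two]⟩
  | succ k ih =>
    obtain ⟨c, hc⟩ := ih
    refine ⟨a ^ k * b + c * d, ?_⟩
    rw [pow_succ, hc, mul_fin_two]
    simp only [mul_zero, zero_mul, add_zero, zero_add, pow_succ]

lemma fin_two_unipotent_pow (b : R) (k : ℕ) : !![1, b; 0, 1] ^ k = !![1, (k : R) * b; 0, 1] := by
  induction k with
  | zero => simp [one_fin_two]
  | succ k ih =>
    rw [pow_succ', ih, mul_fin_two]
    simp only [mul_zero, zero_mul, add_zero, zero_add, mul_one, one_mul, Nat.cast_succ, add_one_mul]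

end Matrix

lemma isInducing_coe_SL2R : Topology.IsInducing fun g : SL2R => (g : Matrix (Fin 2) (Fin 2) ℝ) := ⟨rfl⟩

lemma mem_SO2 {g : SL2R} :
    g ∈ SO2 ↔ ∃ x y : ℝ, x ^ 2 + y ^ 2 = 1 ∧ (g : Matrix (Fin 2) (Fin 2) ℝ) = !![x, -y; y, x] :=
  Iff.rfl

lemma Complex.mem_sphere_zero_one_iff (z : ℂ) : z ∈ Metric.sphere 0 1 ↔ z.re ^ 2 + z.im ^ 2 = 1 := by
  rw [mem_sphere_zero_iff_norm, ← pow_eq_one_iff_of_nonneg (norm_nonneg z) two_ne_zero,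
    Complex.sq_norm, Complex.normSq_apply, sq, sq]

lemma isCompact_SO2 : IsCompact (SO2 : Set SL2R) := by
  have himage : (fun g : SL2R => (g : Matrix (Fin 2) (Fin 2) ℝ)) '' SO2 =
      (fun z : ℂ => !![z.re, -z.im; z.im, z.re]) '' Metric.sphere 0 1 := by
    ext M
    simp only [Set.mem_image, SetLike.mem_coe, mem_SO2, Complex.mem_sphere_zero_one_iff]
    constructor
    · rintro ⟨g, ⟨x, y, hxy, hg⟩, rfl⟩
      exact ⟨⟨x, y⟩, hxy, hg.symm⟩
    · rintro ⟨z, hz, rfl⟩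
      exact ⟨⟨_, by rw [det_fin_two_of]; linear_combination hz⟩, ⟨z.re, z.im, hz, rfl⟩, rfl⟩
  rw [isInducing_coe_SL2R.isCompact_iff, himage]
  exact (isCompact_sphere 0 1).image (by fun_prop)

lemma exists_SO2_mul_eq_upperTriangular (g : SL2R) :
    ∃ r ∈ SO2, ∃ t > 0, ∃ s, ((r * g : SL2R) : Matrix (Fin 2) (Fin 2) ℝ) = !![t, s; 0, t⁻¹] := by
  obtain ⟨a, b, c, d, hg⟩ : ∃ a b c d, (g : Matrix (Fin 2) (Fin 2) ℝ) = !![a, b; c, d] :=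
    ⟨_, _, _, _, eta_fin_two _⟩
  have hdet : a * d - b * c = 1 := by rw [← det_fin_two_of, ← hg]; exact g.2
  have hac : 0 < a ^ 2 + c ^ 2 := by
    by_contra! h
    have ha : a = 0 := by nlinarith
    have hc : c = 0 := by nlinarith
    simp [ha, hc] at hdet
  set t := √(a ^ 2 + c ^ 2)
  have ht : 0 < t := Real.sqrt_pos.2 hac
  have ht2 : t ^ 2 = a ^ 2 + c ^ 2 := Real.sq_sqrt hac.le
  have hxy : (a / t) ^ 2 + (-c / t) ^ 2 = 1 := by field_simp; linear_combination -ht2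
  let r : SL2R := ⟨!![a / t, c / t; -c / t, a / t], by rw [det_fin_two_of]; linear_combination hxy⟩
  refine ⟨r, ⟨_, _, hxy, by simp [r, neg_div]⟩, t, ht, (a * b + c * d) / t, ?_⟩
  rw [Matrix.SpecialLinearGroup.coe_mul, hg]
  simp only [r, mul_fin_two, EmbeddingLike.apply_eq_iff_eq, vecCons_inj, and_true]
  refine ⟨⟨?_, by ring⟩, by ring, ?_⟩
  · field_simp; linear_combination -ht2
  · field_simp; linear_combination hdet

lemma exists_bound_entry_pow {K : Subgroup SL2R} (hK : IsCompact (K : Set SL2R)) {g : SL2R}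
    (hg : g ∈ K) (i j : Fin 2) : ∃ C, ∀ k : ℕ, |((g : Matrix (Fin 2) (Fin 2) ℝ) ^ k) i j| ≤ C := by
  obtain ⟨C, hC⟩ := hK.exists_bound_of_continuousOn
    (isInducing_coe_SL2R.continuous.matrix_elem i j).continuousOn
  exact ⟨C, fun k => by simpa using hC _ (pow_mem hg k)⟩

lemma eq_one_of_upperTriangular_mem {K : Subgroup SL2R} (hK : IsCompact (K : Set SL2R))
    {u : SL2R} (hu : u ∈ K) {t s : ℝ} (ht : 0 < t)
    (h : (u : Matrix (Fin 2) (Fin 2) ℝ) = !![t, s; 0, t⁻¹]) : u = 1 := by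
  have hdiag (i : Fin 2) : |!![t, s; 0, t⁻¹] i i| ≤ 1 := by
    obtain ⟨C, hC⟩ := exists_bound_entry_pow hK hu i i
    refine abs_le_one_of_forall_abs_pow_le (C := C) fun k => ?_
    obtain ⟨c, hc⟩ := Matrix.exists_fin_two_upperTriangular_pow t s t⁻¹ k
    fin_cases i <;> simpa [h, hc] using hC k
  have ht1 : t = 1 := by
    have h0 : |t| ≤ 1 := hdiag 0
    have h1 : |t⁻¹| ≤ 1 := hdiag 1
    rw [abs_of_pos ht] at h0
    rw [abs_of_pos (inv_pos.2 ht), inv_le_one₀ ht] at h1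
    exact le_antisymm h0 h1
  subst ht1
  obtain ⟨C, hC⟩ := exists_bound_entry_pow hK hu 0 1
  have hs : s = 0 := eq_zero_of_forall_abs_natCast_mul_le (C := C) fun k => by
    simpa [h, Matrix.fin_two_unipotent_pow] using hC k
  exact Subtype.ext (h.trans (by simp [hs, one_fin_two]))

/-- `SO(2,ℝ)` is a maximal compact subgroup of the topological group `SL(2,ℝ)`:
it is compact, and any compact subgroup of `SL(2,ℝ)` containing it equals it. -/
theorem so2_maximal_compact :
    IsCompact (SO2 : Set SL2R)
      ∧ ∀ K : Subgroup SL2R, IsCompact (K : Set SL2R) → SO2 ≤ K → K = SO2 := by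
  refine ⟨isCompact_SO2, fun K hK hSO2 => le_antisymm (fun g hg => ?_) hSO2⟩
  obtain ⟨r, hr, t, ht, s, hrg⟩ := exists_SO2_mul_eq_upperTriangular g
  have hrg1 : r * g = 1 := eq_one_of_upperTriangular_mem hK (K.mul_mem (hSO2 hr) hg) ht hrg
  rw [eq_inv_of_mul_eq_one_right hrg1]
  exact SO2.inv_mem hr
end

section
/- The map t ↦ tH from SO(2,ℝ) to the coset space SL(2,ℝ)/H is a homeomorphism, where SL(2,ℝ)/H is the space of left cosets of the standard Borel subgroup H equipped with the quotient topology. -/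
open Matrix

/-- The standard Borel subgroup `H` of `SL(2,ℝ)`: matrices `[[b, c], [0, b⁻¹]]`
with `b` a positive real and `c` a real. -/
def BorelH : Subgroup SL2R where
  carrier := {g | ∃ b c : ℝ, 0 < b ∧ (g : Matrix (Fin 2) (Fin 2) ℝ) = !![b, c; 0, b⁻¹]}
  one_mem' := ⟨1, 0, one_pos, by simp [Matrix.SpecialLinearGroup.coe_one, Matrix.one_fin_two]⟩
  mul_mem' := by
    rintro a b ⟨b₁, c₁, hb₁, ha⟩ ⟨b₂, c₂, hb₂, hb⟩
    refine ⟨b₁ * b₂, b₁ * c₂ + c₁ * b₂⁻¹, mul_pos hb₁ hb₂, ?_⟩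
    rw [Matrix.SpecialLinearGroup.coe_mul, ha, hb, Matrix.mul_fin_two]
    rw [mul_inv]
    congr 1 <;> ring
  inv_mem' := by
    rintro a ⟨b, c, hb, ha⟩
    refine ⟨b⁻¹, -c, inv_pos.mpr hb, ?_⟩
    rw [Matrix.SpecialLinearGroup.coe_inv, ha, Matrix.adjugate_fin_two]
    norm_num

/-!
Gram–Schmidt applied to the columns of `g ∈ SL(2,ℝ)` writes `g = k h` with `k ∈ SO(2)`
the rotation taking `e₁` to the normalised first column of `g`, and `h ∈ H`. Since
`SO(2) ∩ H = 1`, the continuous map `g ↦ k` is constant on the cosets `gH` and restricts to the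
identity on `SO(2)`, so it descends to a continuous inverse of `t ↦ tH`.
-/

namespace Subgroup

variable {G : Type*} [Group G] {K H : Subgroup G} (hKH : Disjoint K H) {r : G → K}
  (hr : ∀ g, (r g : G)⁻¹ * g ∈ H)
include hKH hr

theorem retraction_eq_of_inv_mul_mem {a b : G} (hab : a⁻¹ * b ∈ H) : r a = r b := by
  have hH : (r a : G)⁻¹ * r b ∈ H := by
    have hb : ((r b : G)⁻¹ * b)⁻¹ ∈ H := H.inv_mem (hr b)
    simpa [mul_assoc] using H.mul_mem (H.mul_mem (hr a) hab) hb
  have hK : (r a : G)⁻¹ * r b ∈ K := K.mul_mem (K.inv_mem (r a).2) (r b).2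
  exact Subtype.ext (inv_mul_eq_one.mp (disjoint_def.mp hKH hK hH))

theorem retraction_apply_coe (k : K) : r k = k := by
  have hK : (r k : G)⁻¹ * k ∈ K := K.mul_mem (K.inv_mem (r k).2) k.2
  exact Subtype.ext (inv_mul_eq_one.mp (disjoint_def.mp hKH hK (hr k)))

variable [TopologicalSpace G]

def homeomorphQuotientOfRetraction (hr_cont : Continuous r) : K ≃ₜ G ⧸ H where
  toFun k := QuotientGroup.mk (k : G)
  invFun := Quotient.lift r fun _ _ hab =>
    retraction_eq_of_inv_mul_mem hKH hr (QuotientGroup.leftRel_apply.mp hab)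
  left_inv := retraction_apply_coe hKH hr
  right_inv q := QuotientGroup.induction_on q fun g => QuotientGroup.eq.mpr (hr g)
  continuous_toFun := continuous_quotient_mk'.comp continuous_subtype_val
  continuous_invFun := hr_cont.quotient_lift _

end Subgroup

theorem disjoint_SO2_BorelH : Disjoint SO2 BorelH := by
  refine Subgroup.disjoint_def.mpr fun {t} ⟨x, y, hxy, hK⟩ ⟨b, c, hb, hH⟩ => ?_
  have h := hK.symm.trans hH
  have hxb : x = b := by simpa using congrFun (congrFun h 0) 0
  have hy : y = 0 := by simpa using congrFun (congrFun h 1) 0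
  have hx : x = 1 := by nlinarith
  refine Subtype.ext ?_
  simp [hK, hx, hy, one_fin_two]

def SO2.rotation (x y : ℝ) (hxy : x ^ 2 + y ^ 2 = 1) : SO2 :=
  ⟨⟨!![x, -y; y, x], by rw [det_fin_two_of]; linear_combination hxy⟩, x, y, hxy, rfl⟩

namespace SL2R

theorem firstColumn_sq_add_sq_pos (g : SL2R) : 0 < g 0 0 ^ 2 + g 1 0 ^ 2 := by
  have hdet : g 0 0 * g 1 1 - g 0 1 * g 1 0 = 1 := (det_fin_two _).symm.trans g.2
  by_contra! h
  have h00 : g 0 0 = 0 := by nlinarith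
  have h10 : g 1 0 = 0 := by nlinarith
  simp [h00, h10] at hdet

noncomputable def firstColumnNorm (g : SL2R) : ℝ := √(g 0 0 ^ 2 + g 1 0 ^ 2)

theorem firstColumnNorm_pos (g : SL2R) : 0 < firstColumnNorm g :=
  Real.sqrt_pos.mpr (firstColumn_sq_add_sq_pos g)

theorem firstColumnNorm_sq (g : SL2R) : firstColumnNorm g ^ 2 = g 0 0 ^ 2 + g 1 0 ^ 2 :=
  Real.sq_sqrt (firstColumn_sq_add_sq_pos g).le

noncomputable def rotationPart (g : SL2R) : SO2 :=
  SO2.rotation (g 0 0 / firstColumnNorm g) (g 1 0 / firstColumnNorm g) <| by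
    have := (firstColumnNorm_pos g).ne'
    field_simp
    exact (firstColumnNorm_sq g).symm

theorem rotationPart_inv_mul_mem (g : SL2R) : (rotationPart g : SL2R)⁻¹ * g ∈ BorelH := by
  have hr : firstColumnNorm g ≠ 0 := (firstColumnNorm_pos g).ne'
  have hr2 := firstColumnNorm_sq g
  have hdet : g 0 0 * g 1 1 - g 0 1 * g 1 0 = 1 := (det_fin_two _).symm.trans g.2
  refine ⟨firstColumnNorm g, (g 0 0 * g 0 1 + g 1 0 * g 1 1) / firstColumnNorm g,
    firstColumnNorm_pos g, ?_⟩
  rw [Matrix.SpecialLinearGroup.coe_mul, Matrix.SpecialLinearGroup.coe_inv]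
  ext i j
  fin_cases i <;> fin_cases j <;>
    simp only [rotationPart, SO2.rotation, Fin.isValue, adjugate_fin_two_of, neg_neg, Fin.zero_eta,
      Fin.mk_one, mul_apply, of_apply, cons_val', cons_val_fin_one, cons_val_zero, cons_val_one,
      Fin.sum_univ_two, neg_mul] <;>
    field_simp
  · exact hr2.symm
  · ring
  · linear_combination hdet

theorem continuous_rotationPart : Continuous rotationPart := by
  have hcoe : Continuous fun g : SL2R => (g : Matrix (Fin 2) (Fin 2) ℝ) := continuous_induced_dom
  have hnorm : Continuous firstColumnNorm :=
    ((hcoe.matrix_elem 0 0).pow 2 |>.add ((hcoe.matrix_elem 1 0).pow 2)).sqrt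
  have hr : ∀ g, firstColumnNorm g ≠ 0 := fun g => (firstColumnNorm_pos g).ne'
  have hx := (hcoe.matrix_elem 0 0).div hnorm hr
  have hy := (hcoe.matrix_elem 1 0).div hnorm hr
  refine Continuous.subtype_mk (Continuous.subtype_mk ?_ _) _
  refine continuous_matrix fun i j => ?_
  fin_cases i <;> fin_cases j
  exacts [hx, hy.neg, hy, hx]

end SL2R

/-- The map `t ↦ tH` is a homeomorphism from `SO(2,ℝ)` onto the space
`SL(2,ℝ)/H` of left cosets of the standard Borel subgroup `H`, equipped with
the quotient topology. -/
theorem so2_homeo_quotient_borel :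
    ∃ e : SO2 ≃ₜ (SL2R ⧸ BorelH), ∀ t : SO2, e t = QuotientGroup.mk (t : SL2R) :=
  ⟨Subgroup.homeomorphQuotientOfRetraction disjoint_SO2_BorelH SL2R.rotationPart_inv_mul_mem
    SL2R.continuous_rotationPart, fun _ => rfl⟩
end
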